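/- Let u ∈ H¹(Ω;ℝ²) and p ∈ H¹(Ω) be x₁-periodic with ∇·u = 0 in Ω and u₂ = 0 on x₂ ∈ {0,1}. Then the boundary integral of u·∇p over the two horizontal boundaries satisfies |∫_{x₂=0} u·∇p dx₁ + ∫_{x₂=1} u·∇p dx₁| ≤ 4 ‖p‖_{H¹(Ω)} ‖∇u‖_{L²(Ω)}. -/

import Mathlib

open MeasureTheory Filter Set

noncomputable section

namespace RB

/-- Partial derivative in the horizontal direction. -/
def dx (f : ℝ × ℝ → ℝ) (x : ℝ × ℝ) : ℝ := deriv (fun s => f (s, x.2)) x.1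

/-- Partial derivative in the vertical direction. -/
def dy (f : ℝ × ℝ → ℝ) (x : ℝ × ℝ) : ℝ := deriv (fun s => f (x.1, s)) x.2

/-- Laplacian. -/
def lap (f : ℝ × ℝ → ℝ) (x : ℝ × ℝ) : ℝ := dx (dx f) x + dy (dy f) x

/-- First component of a vector field. -/
def v1 (v : ℝ × ℝ → ℝ × ℝ) : ℝ × ℝ → ℝ := fun x => (v x).1

/-- Second component of a vector field. -/
def v2 (v : ℝ × ℝ → ℝ × ℝ) : ℝ × ℝ → ℝ := fun x => (v x).2

/-- Divergence of a vector field. -/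
def divg (v : ℝ × ℝ → ℝ × ℝ) (x : ℝ × ℝ) : ℝ := dx (v1 v) x + dy (v2 v) x

/-- Squared pointwise norm of the gradient of a scalar field. -/
def gradSq (f : ℝ × ℝ → ℝ) (x : ℝ × ℝ) : ℝ := (dx f x) ^ 2 + (dy f x) ^ 2

/-- Squared pointwise (Frobenius) norm of the gradient of a vector field. -/
def vGradSq (v : ℝ × ℝ → ℝ × ℝ) (x : ℝ × ℝ) : ℝ := gradSq (v1 v) x + gradSq (v2 v) x

/-- Squared pointwise norm of the Hessian of a scalar field. -/
def hessSq (f : ℝ × ℝ → ℝ) (x : ℝ × ℝ) : ℝ :=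
  (dx (dx f) x) ^ 2 + (dx (dy f) x) ^ 2 + (dy (dx f) x) ^ 2 + (dy (dy f) x) ^ 2

/-- Squared pointwise norm of the second derivatives of a vector field. -/
def vHessSq (v : ℝ × ℝ → ℝ × ℝ) (x : ℝ × ℝ) : ℝ := hessSq (v1 v) x + hessSq (v2 v) x

/-- Squared pointwise norm of a vector field. -/
def vSq (v : ℝ × ℝ → ℝ × ℝ) (x : ℝ × ℝ) : ℝ := (v x).1 ^ 2 + (v x).2 ^ 2

/-- Vorticity of a vector field. -/
def vort (v : ℝ × ℝ → ℝ × ℝ) (x : ℝ × ℝ) : ℝ := dx (v2 v) x - dy (v1 v) x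

/-- Long-time average `limsup_{T→∞} (1/T)∫₀^T f`. -/
def lta (f : ℝ → ℝ) : ℝ := limsup (fun T => (1 / T) * ∫ t in (0:ℝ)..T, f t) atTop

/-- Supremum of `|f|` over one horizontal period. -/
def bSup (Γ : ℝ) (f : ℝ → ℝ) : ℝ := sSup ((fun s => |f s|) '' Icc 0 Γ)

/-- `C^{1,1}` regularity of a height function. -/
def C11 (f : ℝ → ℝ) : Prop := ContDiff ℝ 1 f ∧ ∃ K, LipschitzWith K (deriv f)

/-- `C^{2,1}` regularity of a height function. -/
def C21 (f : ℝ → ℝ) : Prop := ContDiff ℝ 2 f ∧ ∃ K, LipschitzWith K (deriv (deriv f))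

/-- The flat domain `[0,Γ] × [0,1]` (one horizontal period). -/
def domF (Γ : ℝ) : Set (ℝ × ℝ) := {x | x.1 ∈ Icc 0 Γ ∧ x.2 ∈ Icc (0:ℝ) 1}

open Topology

section helpers

variable {f : ℝ × ℝ → ℝ}

lemma hasDerivAt_fst (hf : ContDiff ℝ 1 f) (s z : ℝ) :
    HasDerivAt (fun t => f (t, z)) (fderiv ℝ f (s, z) (1, 0)) s := by
  have h1 : HasDerivAt (fun t : ℝ => ((t, z) : ℝ × ℝ)) ((1:ℝ), (0:ℝ)) s :=
    (hasDerivAt_id s).prodMk (hasDerivAt_const s z)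
  exact ((hf.differentiable one_ne_zero (s, z)).hasFDerivAt.comp_hasDerivAt s h1)

lemma hasDerivAt_snd (hf : ContDiff ℝ 1 f) (s z : ℝ) :
    HasDerivAt (fun t => f (s, t)) (fderiv ℝ f (s, z) (0, 1)) z := by
  have h1 : HasDerivAt (fun t : ℝ => ((s, t) : ℝ × ℝ)) ((0:ℝ), (1:ℝ)) z :=
    (hasDerivAt_const z s).prodMk (hasDerivAt_id z)
  exact ((hf.differentiable one_ne_zero (s, z)).hasFDerivAt.comp_hasDerivAt z h1)

lemma dx_eq (hf : ContDiff ℝ 1 f) (x : ℝ × ℝ) : dx f x = fderiv ℝ f x (1, 0) := by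
  have := (hasDerivAt_fst hf x.1 x.2).deriv
  simpa [dx] using this

lemma dy_eq (hf : ContDiff ℝ 1 f) (x : ℝ × ℝ) : dy f x = fderiv ℝ f x (0, 1) := by
  have := (hasDerivAt_snd hf x.1 x.2).deriv
  simpa [dy] using this

lemma hasDerivAt_dx (hf : ContDiff ℝ 1 f) (s z : ℝ) :
    HasDerivAt (fun t => f (t, z)) (dx f (s, z)) s := by
  rw [dx_eq hf]; exact hasDerivAt_fst hf s z

lemma hasDerivAt_dy (hf : ContDiff ℝ 1 f) (s z : ℝ) :
    HasDerivAt (fun t => f (s, t)) (dy f (s, z)) z := by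
  rw [dy_eq hf]; exact hasDerivAt_snd hf s z

lemma continuous_dx (hf : ContDiff ℝ 1 f) : Continuous (dx f) := by
  have : Continuous fun x => fderiv ℝ f x (1, 0) :=
    (hf.continuous_fderiv one_ne_zero).clm_apply continuous_const
  exact this.congr fun x => (dx_eq hf x).symm

lemma continuous_dy (hf : ContDiff ℝ 1 f) : Continuous (dy f) := by
  have : Continuous fun x => fderiv ℝ f x (0, 1) :=
    (hf.continuous_fderiv one_ne_zero).clm_apply continuous_const
  exact this.congr fun x => (dy_eq hf x).symm

lemma pbp {Γ : ℝ} {f g f' g' : ℝ → ℝ}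
    (hf : ∀ s, HasDerivAt f (f' s) s) (hg : ∀ s, HasDerivAt g (g' s) s)
    (hc : Continuous fun s => f s * g' s + f' s * g s)
    (hper : f Γ * g Γ = f 0 * g 0) :
    ∫ s in (0:ℝ)..Γ, (f s * g' s + f' s * g s) = 0 := by
  have h : ∀ s ∈ uIcc (0:ℝ) Γ,
      HasDerivAt (fun t => f t * g t) (f s * g' s + f' s * g s) s := by
    intro s _
    have := (hf s).fun_mul (hg s)
    simpa [add_comm] using this
  rw [intervalIntegral.integral_eq_sub_of_hasDerivAt h (hc.intervalIntegrable _ _)]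
  rw [hper]; ring

lemma cs3 {a b c d e f : ℝ} (ha : 0 ≤ a) (hb : 0 ≤ b) (hc : 0 ≤ c) (hd : 0 ≤ d)
    (he : 0 ≤ e) (hf : 0 ≤ f) :
    a*b + c*d + e*f ≤ Real.sqrt (a^2+c^2+e^2) * Real.sqrt (b^2+d^2+f^2) := by
  have h : (a*b + c*d + e*f)^2 ≤ (a^2+c^2+e^2) * (b^2+d^2+f^2) := by
    nlinarith [sq_nonneg (a*d - c*b), sq_nonneg (a*f - e*b), sq_nonneg (c*f - e*d),
      mul_nonneg (mul_nonneg ha hb) (mul_nonneg hc hd),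
      mul_nonneg (mul_nonneg ha hb) (mul_nonneg he hf),
      mul_nonneg (mul_nonneg hc hd) (mul_nonneg he hf)]
  calc a*b+c*d+e*f = Real.sqrt ((a*b+c*d+e*f)^2) := (Real.sqrt_sq (by positivity)).symm
  _ ≤ Real.sqrt ((a^2+c^2+e^2)*(b^2+d^2+f^2)) := Real.sqrt_le_sqrt h
  _ = _ := Real.sqrt_mul (by positivity) _

lemma integral_sqrt_mul_sqrt_le {α : Type*} [MeasurableSpace α] (μ : Measure α) {f g : α → ℝ}
    (hf0 : ∀ x, 0 ≤ f x) (hg0 : ∀ x, 0 ≤ g x)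
    (hf : Integrable f μ) (hg : Integrable g μ) :
    ∫ x, Real.sqrt (f x) * Real.sqrt (g x) ∂μ
      ≤ Real.sqrt (∫ x, f x ∂μ) * Real.sqrt (∫ x, g x ∂μ) := by
  have hpq : Real.HolderConjugate 2 2 := Real.HolderConjugate.two_two
  have hsf : AEStronglyMeasurable (fun x => Real.sqrt (f x)) μ :=
    Real.continuous_sqrt.comp_aestronglyMeasurable hf.aestronglyMeasurable
  have hsg : AEStronglyMeasurable (fun x => Real.sqrt (g x)) μ :=
    Real.continuous_sqrt.comp_aestronglyMeasurable hg.aestronglyMeasurable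
  have hmf : MemLp (fun x => Real.sqrt (f x)) (ENNReal.ofReal 2) μ := by
    rw [show ENNReal.ofReal (2:ℝ) = 2 by simp]
    rw [memLp_two_iff_integrable_sq hsf]
    exact hf.congr (Filter.Eventually.of_forall fun x => (Real.sq_sqrt (hf0 x)).symm)
  have hmg : MemLp (fun x => Real.sqrt (g x)) (ENNReal.ofReal 2) μ := by
    rw [show ENNReal.ofReal (2:ℝ) = 2 by simp]
    rw [memLp_two_iff_integrable_sq hsg]
    exact hg.congr (Filter.Eventually.of_forall fun x => (Real.sq_sqrt (hg0 x)).symm)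
  have H := integral_mul_le_Lp_mul_Lq_of_nonneg hpq
    (Filter.Eventually.of_forall fun x => Real.sqrt_nonneg (f x))
    (Filter.Eventually.of_forall fun x => Real.sqrt_nonneg (g x)) hmf hmg
  have e1 : ∫ x, Real.sqrt (f x) ^ (2:ℝ) ∂μ = ∫ x, f x ∂μ := by
    refine integral_congr_ae (Filter.Eventually.of_forall fun x => ?_)
    simp only [show ((2:ℝ)) = ((2:ℕ):ℝ) by norm_num, Real.rpow_natCast]
    exact Real.sq_sqrt (hf0 x)
  have e2 : ∫ x, Real.sqrt (g x) ^ (2:ℝ) ∂μ = ∫ x, g x ∂μ := by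
    refine integral_congr_ae (Filter.Eventually.of_forall fun x => ?_)
    simp only [show ((2:ℝ)) = ((2:ℕ):ℝ) by norm_num, Real.rpow_natCast]
    exact Real.sq_sqrt (hg0 x)
  rw [e1, e2] at H
  calc ∫ x, Real.sqrt (f x) * Real.sqrt (g x) ∂μ
      ≤ (∫ x, f x ∂μ) ^ (1/2:ℝ) * (∫ x, g x ∂μ) ^ (1/2:ℝ) := H
  _ = _ := by rw [← Real.sqrt_eq_rpow, ← Real.sqrt_eq_rpow]

lemma abs_sub_le_of_dy_bound {f : ℝ × ℝ → ℝ}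
    {f' : ℝ → ℝ} {C s z w : ℝ}
    (hder : ∀ t, HasDerivAt (fun t' => f (s, t')) (f' t) t)
    (hz : z ∈ Icc (-1:ℝ) 2) (hw : w ∈ Icc (-1:ℝ) 2)
    (hbd : ∀ t ∈ Icc (-1:ℝ) 2, |f' t| ≤ C) :
    |f (s, w) - f (s, z)| ≤ C * |w - z| := by
  have := Convex.norm_image_sub_le_of_norm_hasDerivWithin_le
    (f := fun t => f (s, t)) (f' := f') (s := Icc (-1:ℝ) 2)
    (fun t _ => (hder t).hasDerivWithinAt)
    (fun t ht => by simpa [Real.norm_eq_abs] using hbd t ht) (convex_Icc _ _) hz hw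
  simpa [Real.norm_eq_abs] using this

end helpers
set_option maxHeartbeats 2000000 in
/-- Boundary pressure-gradient bound on the flat periodic strip.
For `x₁`-periodic `u ∈ H¹(Ω;ℝ²)` and `p ∈ H¹(Ω)` with `∇·u = 0` in `Ω` and `u₂ = 0` on
`x₂ ∈ {0,1}`, the boundary integral of `u·∇p` over the two horizontal boundaries
satisfies `|∫_{x₂=0} u·∇p dx₁ + ∫_{x₂=1} u·∇p dx₁| ≤ 4‖p‖_{H¹(Ω)}‖∇u‖_{L²(Ω)}`. -/
theorem flat_boundary_pressure_gradient (Γ : ℝ) (hΓ : 0 < Γ)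
    (u : ℝ × ℝ → ℝ × ℝ) (p : ℝ × ℝ → ℝ)
    (hu_reg : ContDiff ℝ 1 u) (hp_reg : ContDiff ℝ 1 p)
    (hu_per : ∀ x : ℝ × ℝ, u (x.1 + Γ, x.2) = u x)
    (hp_per : ∀ x : ℝ × ℝ, p (x.1 + Γ, x.2) = p x)
    (hu_H1 : IntegrableOn (fun x => vSq u x + vGradSq u x) (domF Γ))
    (hp_H1 : IntegrableOn (fun x => (p x) ^ 2 + gradSq p x) (domF Γ))
    (hdiv : ∀ x ∈ domF Γ, divg u x = 0)
    (hbot : ∀ s : ℝ, (u (s, 0)).2 = 0) (htop : ∀ s : ℝ, (u (s, 1)).2 = 0) :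
    |(∫ s in (0:ℝ)..Γ, ((u (s, 0)).1 * dx p (s, 0) + (u (s, 0)).2 * dy p (s, 0)))
      + ∫ s in (0:ℝ)..Γ, ((u (s, 1)).1 * dx p (s, 1) + (u (s, 1)).2 * dy p (s, 1))|
      ≤ 4 * Real.sqrt (∫ x in domF Γ, ((p x) ^ 2 + gradSq p x))
          * Real.sqrt (∫ x in domF Γ, vGradSq u x) := by
  have hu1 : ContDiff ℝ 1 (v1 u) := contDiff_fst.comp hu_reg
  have hu2 : ContDiff ℝ 1 (v2 u) := contDiff_snd.comp hu_reg
  have cdxu1 : Continuous (dx (v1 u)) := continuous_dx hu1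
  have cdyu1 : Continuous (dy (v1 u)) := continuous_dy hu1
  have cdxu2 : Continuous (dx (v2 u)) := continuous_dx hu2
  have cdyu2 : Continuous (dy (v2 u)) := continuous_dy hu2
  have cdxp : Continuous (dx p) := continuous_dx hp_reg
  have cdyp : Continuous (dy p) := continuous_dy hp_reg
  have cp : Continuous p := hp_reg.continuous
  have cu1 : Continuous (v1 u) := hu1.continuous
  have c1 : ∀ z : ℝ, Continuous fun s => v1 u (s, z) :=
    fun z => cu1.comp (continuous_id.prodMk continuous_const)
  have c2 : ∀ w : ℝ, Continuous fun s => dx p (s, w) :=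
    fun w => cdxp.comp (continuous_id.prodMk continuous_const)
  have c3 : ∀ z : ℝ, Continuous fun s => dx (v1 u) (s, z) :=
    fun z => cdxu1.comp (continuous_id.prodMk continuous_const)
  have c4 : ∀ w : ℝ, Continuous fun s => p (s, w) :=
    fun w => cp.comp (continuous_id.prodMk continuous_const)
  have perU : ∀ z : ℝ, v1 u (Γ, z) = v1 u (0, z) := by
    intro z
    have h := hu_per (0, z)
    simp only [zero_add] at h
    exact congrArg Prod.fst h
  have perP : ∀ w : ℝ, p (Γ, w) = p (0, w) := by
    intro w
    have h := hp_per (0, w)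
    simpa using h
  -- periodic integration by parts in the horizontal variable
  have key : ∀ z w : ℝ,
      (∫ s in (0:ℝ)..Γ, (v1 u (s, z) * dx p (s, w) + dx (v1 u) (s, z) * p (s, w))) = 0 := by
    intro z w
    exact pbp (fun s => hasDerivAt_dx hu1 s z) (fun s => hasDerivAt_dx hp_reg s w)
      (((c1 z).mul (c2 w)).add ((c3 z).mul (c4 w))) (by rw [perU z, perP w])
  have hFrep : ∀ z w : ℝ, (∫ s in (0:ℝ)..Γ, v1 u (s, z) * dx p (s, w))
      = ∫ s in (0:ℝ)..Γ, -(dx (v1 u) (s, z) * p (s, w)) := by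
    intro z w
    have ia : IntervalIntegrable (fun s => v1 u (s, z) * dx p (s, w)) volume 0 Γ := ((c1 z).mul (c2 w)).intervalIntegrable (μ := volume) 0 Γ
    have ib : IntervalIntegrable (fun s => dx (v1 u) (s, z) * p (s, w)) volume 0 Γ := ((c3 z).mul (c4 w)).intervalIntegrable (μ := volume) 0 Γ
    have h := key z w
    rw [intervalIntegral.integral_add ia ib] at h
    rw [intervalIntegral.integral_neg]
    linarith
  set F : ℝ → ℝ := fun z => ∫ s in (0:ℝ)..Γ, -(dx (v1 u) (s, z) * p (s, z)) with hFdef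
  have hFneg : ∀ z : ℝ, (∫ s in (0:ℝ)..Γ, dx (v1 u) (s, z) * p (s, z)) = -F z := by
    intro z
    rw [hFdef]
    simp only
    rw [intervalIntegral.integral_neg, neg_neg]
  have cF : Continuous F := by
    have hcont : Continuous (Function.uncurry fun z s => -(dx (v1 u) (s, z) * p (s, z))) := by
      apply Continuous.neg
      exact (cdxu1.comp (continuous_snd.prodMk continuous_fst)).mul
        (cp.comp (continuous_snd.prodMk continuous_fst))
    exact intervalIntegral.continuous_parametric_intervalIntegral_of_continuous' hcont 0 Γ
  have hF0 : (∫ s in (0:ℝ)..Γ,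
      ((u (s, 0)).1 * dx p (s, 0) + (u (s, 0)).2 * dy p (s, 0))) = F 0 := by
    have e : (∫ s in (0:ℝ)..Γ, ((u (s, 0)).1 * dx p (s, 0) + (u (s, 0)).2 * dy p (s, 0)))
        = ∫ s in (0:ℝ)..Γ, v1 u (s, 0) * dx p (s, 0) := by
      simp only [hbot, zero_mul, add_zero]
      rfl
    rw [e]
    exact hFrep 0 0
  have hF1 : (∫ s in (0:ℝ)..Γ,
      ((u (s, 1)).1 * dx p (s, 1) + (u (s, 1)).2 * dy p (s, 1))) = F 1 := by
    have e : (∫ s in (0:ℝ)..Γ, ((u (s, 1)).1 * dx p (s, 1) + (u (s, 1)).2 * dy p (s, 1)))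
        = ∫ s in (0:ℝ)..Γ, v1 u (s, 1) * dx p (s, 1) := by
      simp only [htop, zero_mul, add_zero]
      rfl
    rw [e]
    exact hFrep 1 1
  set l : Filter ℝ := 𝓝[≠] (0:ℝ) with hldef
  haveI hlne : l.NeBot := by rw [hldef]; infer_instance
  set φ : ℝ → ℝ := fun z => (2*z - 1) * F z with hphidef
  have cφ : Continuous φ := ((continuous_const.mul continuous_id).sub continuous_const).mul cF
  set T : ℝ → ℝ := fun h => ∫ z in (0:ℝ)..1, (2*z - 1)/h * (F (z + h) - F z) with hTdef
  have intφ : ∀ a b : ℝ, IntervalIntegrable φ volume a b := fun a b => cφ.intervalIntegrable a b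
  have intF : ∀ a b : ℝ, IntervalIntegrable F volume a b := fun a b => cF.intervalIntegrable a b
  -- exact computation of T h
  have hTeq : ∀ h : ℝ, h ≠ 0 → T h
      = h⁻¹ * (∫ z in (1:ℝ)..1+h, φ z) - h⁻¹ * (∫ z in (0:ℝ)..h, φ z)
        - 2 * ∫ z in h..1+h, F z := by
    intro h hh
    have i1 : IntervalIntegrable (fun z => h⁻¹ * ((2*z-1) * F (z+h))) volume 0 1 :=
      (continuous_const.mul (((continuous_const.mul continuous_id).sub continuous_const).mul
        (cF.comp (continuous_id.add continuous_const)))).intervalIntegrable _ _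
    have i2 : IntervalIntegrable (fun z => h⁻¹ * φ z) volume 0 1 :=
      (continuous_const.mul cφ).intervalIntegrable _ _
    have e1 : T h = (∫ z in (0:ℝ)..1, h⁻¹ * ((2*z-1) * F (z+h)))
        - ∫ z in (0:ℝ)..1, h⁻¹ * φ z := by
      rw [hTdef, ← intervalIntegral.integral_sub i1 i2]
      apply intervalIntegral.integral_congr
      intro z _
      simp only [hphidef]
      ring
    have e2 : (∫ z in (0:ℝ)..1, h⁻¹ * ((2*z-1) * F (z+h)))
        = h⁻¹ * ∫ z in h..1+h, ((2*(z-h)-1) * F z) := by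
      rw [intervalIntegral.integral_const_mul]
      congr 1
      have e2a : (∫ z in (0:ℝ)..1, (2*z-1) * F (z+h))
          = ∫ z in (0:ℝ)..1, (fun w => (2*(w-h)-1) * F w) (z + h) := by
        apply intervalIntegral.integral_congr
        intro z _
        simp only
        ring_nf
      rw [e2a, intervalIntegral.integral_comp_add_right (fun w => (2*(w-h)-1) * F w) h]
      norm_num
    have i3 : IntervalIntegrable (fun z => (2*h) * F z) volume h (1+h) :=
      (continuous_const.mul cF).intervalIntegrable _ _
    have i4 : IntervalIntegrable (fun z => (2*(z-h)-1) * F z) volume h (1+h) :=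
      (((continuous_const.mul (continuous_id.sub continuous_const)).sub
        continuous_const).mul cF).intervalIntegrable _ _
    have e3 : (∫ z in h..1+h, (2*(z-h)-1) * F z)
        = (∫ z in h..1+h, φ z) - (2*h) * ∫ z in h..1+h, F z := by
      rw [← intervalIntegral.integral_const_mul,
        ← intervalIntegral.integral_sub (intφ _ _) i3]
      apply intervalIntegral.integral_congr
      intro z _
      simp only [hphidef]
      ring
    have e4 : (∫ z in h..1+h, φ z) = (∫ z in h..1, φ z) + ∫ z in (1:ℝ)..1+h, φ z :=
      (intervalIntegral.integral_add_adjacent_intervals (intφ _ _) (intφ _ _)).symm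
    have e5 : (∫ z in (0:ℝ)..1, φ z) = (∫ z in (0:ℝ)..h, φ z) + ∫ z in h..1, φ z :=
      (intervalIntegral.integral_add_adjacent_intervals (intφ _ _) (intφ _ _)).symm
    rw [e1, e2, e3, intervalIntegral.integral_const_mul, e5, e4]
    field_simp
    ring
  have l1 : Tendsto (fun h => h⁻¹ * ∫ z in (1:ℝ)..1+h, φ z) l (𝓝 (φ 1)) := by
    have hP := ((cφ.integral_hasStrictDerivAt 1 1).hasDerivAt).tendsto_slope_zero
    simp only [intervalIntegral.integral_same, sub_zero, smul_eq_mul] at hP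
    exact hP
  have l2 : Tendsto (fun h => h⁻¹ * ∫ z in (0:ℝ)..h, φ z) l (𝓝 (φ 0)) := by
    have hP := ((cφ.integral_hasStrictDerivAt 0 0).hasDerivAt).tendsto_slope_zero
    simp only [intervalIntegral.integral_same, sub_zero, smul_eq_mul, zero_add] at hP
    exact hP
  have cQ : Continuous fun t => ∫ z in (0:ℝ)..t, F z := by
    rw [continuous_iff_continuousAt]
    intro t
    exact ((cF.integral_hasStrictDerivAt 0 t).hasDerivAt).continuousAt
  have l3 : Tendsto (fun h => ∫ z in h..1+h, F z) l (𝓝 (∫ z in (0:ℝ)..1, F z)) := by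
    have h1 : Tendsto (fun h : ℝ => (∫ z in (0:ℝ)..1+h, F z) - ∫ z in (0:ℝ)..h, F z) (𝓝 0)
        (𝓝 (∫ z in (0:ℝ)..1, F z)) := by
      have hQ2 : Continuous fun h : ℝ => (∫ z in (0:ℝ)..(1+h), F z) - ∫ z in (0:ℝ)..h, F z :=
        (cQ.comp ((continuous_const (y := (1:ℝ))).add continuous_id)).sub cQ
      have h2 := hQ2.tendsto 0
      simpa using h2
    refine (h1.mono_left nhdsWithin_le_nhds).congr fun h => ?_
    have h3 := intervalIntegral.integral_add_adjacent_intervals (intF 0 h) (intF h (1+h))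
    linarith
  have hne : ∀ᶠ h in l, h ≠ 0 := by
    filter_upwards [self_mem_nhdsWithin] with h hh using hh
  have claim_a : Tendsto T l (𝓝 (φ 1 - φ 0 - 2 * ∫ z in (0:ℝ)..1, F z)) := by
    refine ((l1.sub l2).sub (l3.const_mul 2)).congr' ?_
    filter_upwards [hne] with h hh
    exact (hTeq h hh).symm
  -- the double-integral representation of T h
  have hD : ∀ h z : ℝ, (∫ s in (0:ℝ)..Γ,
      ((v1 u (s, z+h) - v1 u (s, z)) * dx p (s, z+h)
        - dx (v1 u) (s, z) * (p (s, z+h) - p (s, z)))) = F (z+h) - F z := by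
    intro h z
    have i1 : IntervalIntegrable (fun s => v1 u (s, z+h) * dx p (s, z+h)) volume 0 Γ :=
      ((c1 _).mul (c2 _)).intervalIntegrable _ _
    have i2 : IntervalIntegrable
        (fun s => v1 u (s, z) * dx p (s, z+h) + dx (v1 u) (s, z) * p (s, z+h)) volume 0 Γ :=
      (((c1 _).mul (c2 _)).add ((c3 _).mul (c4 _))).intervalIntegrable _ _
    have i3 : IntervalIntegrable (fun s => dx (v1 u) (s, z) * p (s, z)) volume 0 Γ :=
      ((c3 _).mul (c4 _)).intervalIntegrable _ _
    have e : (∫ s in (0:ℝ)..Γ, ((v1 u (s, z+h) - v1 u (s, z)) * dx p (s, z+h)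
        - dx (v1 u) (s, z) * (p (s, z+h) - p (s, z))))
        = ∫ s in (0:ℝ)..Γ, ((v1 u (s, z+h) * dx p (s, z+h)
            - (v1 u (s, z) * dx p (s, z+h) + dx (v1 u) (s, z) * p (s, z+h)))
            + dx (v1 u) (s, z) * p (s, z)) := by
      apply intervalIntegral.integral_congr
      intro s _
      ring
    rw [e, intervalIntegral.integral_add (i1.sub i2) i3,
      intervalIntegral.integral_sub i1 i2, key z (z+h), hFrep (z+h) (z+h), hFneg z]
    simp only [hFdef]
    ring
  have hTiter : ∀ h : ℝ, T h = ∫ z in Ioc (0:ℝ) 1, (∫ s in Ioc (0:ℝ) Γ,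
      ((2*z-1)/h * ((v1 u (s, z+h) - v1 u (s, z)) * dx p (s, z+h)
        - dx (v1 u) (s, z) * (p (s, z+h) - p (s, z))))) := by
    intro h
    rw [hTdef]
    simp only
    rw [intervalIntegral.integral_of_le (by norm_num : (0:ℝ) ≤ 1)]
    refine integral_congr_ae (Filter.Eventually.of_forall fun z => ?_)
    show (2*z-1)/h * (F (z + h) - F z) = ∫ s in Ioc (0:ℝ) Γ,
      ((2*z-1)/h * ((v1 u (s, z+h) - v1 u (s, z)) * dx p (s, z+h)
        - dx (v1 u) (s, z) * (p (s, z+h) - p (s, z))))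
    rw [← hD h z, ← intervalIntegral.integral_const_mul,
      intervalIntegral.integral_of_le hΓ.le]
  -- uniform bounds
  have hKcpt : IsCompact (Icc (0:ℝ) Γ ×ˢ Icc (-1:ℝ) 2) := isCompact_Icc.prod isCompact_Icc
  obtain ⟨C1, hC1⟩ := hKcpt.exists_bound_of_continuousOn cdyu1.continuousOn
  obtain ⟨C2, hC2⟩ := hKcpt.exists_bound_of_continuousOn cdxp.continuousOn
  obtain ⟨C3, hC3⟩ := hKcpt.exists_bound_of_continuousOn cdxu1.continuousOn
  obtain ⟨C4, hC4⟩ := hKcpt.exists_bound_of_continuousOn cdyp.continuousOn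
  have hptK : ((0:ℝ), (0:ℝ)) ∈ Icc (0:ℝ) Γ ×ˢ Icc (-1:ℝ) 2 :=
    ⟨⟨le_rfl, hΓ.le⟩, by norm_num⟩
  have hC10 : 0 ≤ C1 := le_trans (norm_nonneg _) (hC1 _ hptK)
  have hC20 : 0 ≤ C2 := le_trans (norm_nonneg _) (hC2 _ hptK)
  have hC30 : 0 ≤ C3 := le_trans (norm_nonneg _) (hC3 _ hptK)
  have hC40 : 0 ≤ C4 := le_trans (norm_nonneg _) (hC4 _ hptK)
  set Cb : ℝ := C1*C2 + C3*C4 with hCbdef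
  have hCb0 : 0 ≤ Cb := by positivity
  have habs : ∀ a b : ℝ, |a - b| ≤ |a| + |b| := fun a b => by
    simpa [Real.norm_eq_abs] using norm_sub_le a b
  have hbound : ∀ h : ℝ, h ≠ 0 → |h| ≤ 1 → ∀ z ∈ Icc (0:ℝ) 1, ∀ s ∈ Icc (0:ℝ) Γ,
      |(2*z-1)/h * ((v1 u (s, z+h) - v1 u (s, z)) * dx p (s, z+h)
        - dx (v1 u) (s, z) * (p (s, z+h) - p (s, z)))| ≤ Cb := by
    intro h hh hh1 z hz s hs
    have hz1 : z ∈ Icc (-1:ℝ) 2 := ⟨by linarith [hz.1], by linarith [hz.2]⟩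
    have hhab := abs_le.mp hh1
    have hzh : z + h ∈ Icc (-1:ℝ) 2 :=
      ⟨by linarith [hz.1, hhab.1], by linarith [hz.2, hhab.2]⟩
    have hΔu : |v1 u (s, z+h) - v1 u (s, z)| ≤ C1 * |h| := by
      have h5 := abs_sub_le_of_dy_bound (f := v1 u) (f' := fun t => dy (v1 u) (s, t))
        (fun t => hasDerivAt_dy hu1 s t) hz1 hzh
        (fun t ht => by simpa [Real.norm_eq_abs] using hC1 (s, t) ⟨hs, ht⟩)
      simpa [add_sub_cancel_left] using h5
    have hΔp : |p (s, z+h) - p (s, z)| ≤ C4 * |h| := by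
      have h5 := abs_sub_le_of_dy_bound (f := p) (f' := fun t => dy p (s, t))
        (fun t => hasDerivAt_dy hp_reg s t) hz1 hzh
        (fun t ht => by simpa [Real.norm_eq_abs] using hC4 (s, t) ⟨hs, ht⟩)
      simpa [add_sub_cancel_left] using h5
    have hdxp : |dx p (s, z+h)| ≤ C2 := by
      simpa [Real.norm_eq_abs] using hC2 (s, z+h) ⟨hs, hzh⟩
    have hdxu : |dx (v1 u) (s, z)| ≤ C3 := by
      simpa [Real.norm_eq_abs] using hC3 (s, z) ⟨hs, hz1⟩
    have h2z : |2*z-1| ≤ 1 := abs_le.mpr ⟨by linarith [hz.1], by linarith [hz.2]⟩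
    have hhpos : (0:ℝ) < |h| := abs_pos.mpr hh
    have hX : |(v1 u (s, z+h) - v1 u (s, z)) * dx p (s, z+h)
        - dx (v1 u) (s, z) * (p (s, z+h) - p (s, z))| ≤ Cb * |h| := by
      calc |(v1 u (s, z+h) - v1 u (s, z)) * dx p (s, z+h)
            - dx (v1 u) (s, z) * (p (s, z+h) - p (s, z))|
          ≤ |(v1 u (s, z+h) - v1 u (s, z)) * dx p (s, z+h)|
            + |dx (v1 u) (s, z) * (p (s, z+h) - p (s, z))| := habs _ _
      _ = |v1 u (s, z+h) - v1 u (s, z)| * |dx p (s, z+h)|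
            + |dx (v1 u) (s, z)| * |p (s, z+h) - p (s, z)| := by rw [abs_mul, abs_mul]
      _ ≤ (C1*|h|) * C2 + C3 * (C4*|h|) :=
            add_le_add (mul_le_mul hΔu hdxp (abs_nonneg _) (by positivity))
              (mul_le_mul hdxu hΔp (abs_nonneg _) hC30)
      _ = Cb * |h| := by rw [hCbdef]; ring
    calc |(2*z-1)/h * ((v1 u (s, z+h) - v1 u (s, z)) * dx p (s, z+h)
          - dx (v1 u) (s, z) * (p (s, z+h) - p (s, z)))|
        = |2*z-1| / |h| * |(v1 u (s, z+h) - v1 u (s, z)) * dx p (s, z+h)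
          - dx (v1 u) (s, z) * (p (s, z+h) - p (s, z))| := by rw [abs_mul, abs_div]
    _ ≤ 1 / |h| * (Cb * |h|) := by
        apply mul_le_mul _ hX (abs_nonneg _) (by positivity)
        exact (div_le_div_iff_of_pos_right hhpos).mpr h2z
    _ = Cb := by field_simp
  have hsmall : ∀ᶠ h in l, |h| ≤ 1 := by
    apply Filter.Eventually.filter_mono nhdsWithin_le_nhds
    filter_upwards [Metric.ball_mem_nhds (0:ℝ) one_pos] with h hh
    rw [Metric.mem_ball, Real.dist_eq, sub_zero] at hh
    exact hh.le
  -- continuity of the inner integral in z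
  have hInnCont : ∀ h : ℝ, Continuous fun z => ∫ s in Ioc (0:ℝ) Γ,
      ((2*z-1)/h * ((v1 u (s, z+h) - v1 u (s, z)) * dx p (s, z+h)
        - dx (v1 u) (s, z) * (p (s, z+h) - p (s, z)))) := by
    intro h
    have hrw : (fun z => ∫ s in Ioc (0:ℝ) Γ,
        ((2*z-1)/h * ((v1 u (s, z+h) - v1 u (s, z)) * dx p (s, z+h)
          - dx (v1 u) (s, z) * (p (s, z+h) - p (s, z)))))
        = fun z => ∫ s in (0:ℝ)..Γ,
        ((2*z-1)/h * ((v1 u (s, z+h) - v1 u (s, z)) * dx p (s, z+h)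
          - dx (v1 u) (s, z) * (p (s, z+h) - p (s, z)))) := by
      funext z
      rw [intervalIntegral.integral_of_le hΓ.le]
    rw [hrw]
    apply intervalIntegral.continuous_parametric_intervalIntegral_of_continuous' (μ := volume)
      _ 0 Γ
    have cswap : Continuous fun q : ℝ × ℝ => ((q.2, q.1) : ℝ × ℝ) :=
      continuous_snd.prodMk continuous_fst
    have cswaph : Continuous fun q : ℝ × ℝ => ((q.2, q.1 + h) : ℝ × ℝ) :=
      continuous_snd.prodMk (continuous_fst.add continuous_const)
    exact (((continuous_const.mul continuous_fst).sub continuous_const).div_const h).mul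
      ((((cu1.comp cswaph).sub (cu1.comp cswap)).mul (cdxp.comp cswaph)).sub
        ((cdxu1.comp cswap).mul ((cp.comp cswaph).sub (cp.comp cswap))))
  set gI : ℝ → ℝ := fun z => ∫ s in Ioc (0:ℝ) Γ,
    ((2*z-1) * (dy (v1 u) (s, z) * dx p (s, z) - dx (v1 u) (s, z) * dy p (s, z))) with hgIdef
  have claim_b : Tendsto T l (𝓝 (∫ z in Ioc (0:ℝ) 1, gI z)) := by
    rw [show T = fun h => ∫ z in Ioc (0:ℝ) 1, (∫ s in Ioc (0:ℝ) Γ,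
      ((2*z-1)/h * ((v1 u (s, z+h) - v1 u (s, z)) * dx p (s, z+h)
        - dx (v1 u) (s, z) * (p (s, z+h) - p (s, z))))) from funext hTiter]
    apply MeasureTheory.tendsto_integral_filter_of_dominated_convergence
      (bound := fun _ : ℝ => Cb * Γ)
    · exact Filter.Eventually.of_forall fun h => (hInnCont h).aestronglyMeasurable
    · filter_upwards [hne, hsmall] with h hh hh1
      refine (ae_restrict_mem measurableSet_Ioc).mono fun z hz => ?_
      have hzI : z ∈ Icc (0:ℝ) 1 := Ioc_subset_Icc_self hz
      have hfin : volume (Ioc (0:ℝ) Γ) < ⊤ := by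
        rw [Real.volume_Ioc]
        exact ENNReal.ofReal_lt_top
      have hb := norm_setIntegral_le_of_norm_le_const (μ := volume) hfin
        (C := Cb) (f := fun s => (2*z-1)/h * ((v1 u (s, z+h) - v1 u (s, z)) * dx p (s, z+h)
          - dx (v1 u) (s, z) * (p (s, z+h) - p (s, z))))
        (fun s hs => by
          rw [Real.norm_eq_abs]
          exact hbound h hh hh1 z hzI s (Ioc_subset_Icc_self hs))
      rw [Real.norm_eq_abs] at hb
      refine hb.trans ?_
      rw [measureReal_def, Real.volume_Ioc]
      rw [ENNReal.toReal_ofReal (by linarith)]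
      simp
    · exact integrable_const _
    · refine (ae_restrict_mem measurableSet_Ioc).mono fun z hz => ?_
      rw [hgIdef]
      simp only
      apply MeasureTheory.tendsto_integral_filter_of_dominated_convergence
        (bound := fun _ : ℝ => Cb)
      · refine Filter.Eventually.of_forall fun h => Continuous.aestronglyMeasurable ?_
        have cA : Continuous fun s => v1 u (s, z+h) := c1 _
        have cB : Continuous fun s => dx p (s, z+h) := c2 _
        have cC : Continuous fun s => p (s, z+h) := c4 _
        exact continuous_const.mul (((cA.sub (c1 z)).mul cB).sub
          ((c3 z).mul (cC.sub (c4 z))))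
      · filter_upwards [hne, hsmall] with h hh hh1
        refine (ae_restrict_mem measurableSet_Ioc).mono fun s hs => ?_
        exact hbound h hh hh1 z (Ioc_subset_Icc_self hz) s (Ioc_subset_Icc_self hs)
      · exact integrable_const _
      · refine Filter.Eventually.of_forall fun s => ?_
        have t1 : Tendsto (fun h : ℝ => h⁻¹ * (v1 u (s, z + h) - v1 u (s, z))) l
            (𝓝 (dy (v1 u) (s, z))) := by
          have h5 := (hasDerivAt_dy hu1 s z).tendsto_slope_zero
          simpa [smul_eq_mul] using h5
        have t3 : Tendsto (fun h : ℝ => h⁻¹ * (p (s, z + h) - p (s, z))) l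
            (𝓝 (dy p (s, z))) := by
          have h5 := (hasDerivAt_dy hp_reg s z).tendsto_slope_zero
          simpa [smul_eq_mul] using h5
        have t2 : Tendsto (fun h : ℝ => dx p (s, z + h)) l (𝓝 (dx p (s, z))) := by
          have hc : Tendsto (fun h : ℝ => ((s, z + h) : ℝ × ℝ)) (𝓝 0) (𝓝 (s, z)) := by
            have h6 : Continuous fun h : ℝ => ((s, z + h) : ℝ × ℝ) :=
              continuous_const.prodMk (continuous_const.add continuous_id)
            simpa using h6.tendsto 0
          exact (cdxp.tendsto (s, z)).comp (hc.mono_left nhdsWithin_le_nhds)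
        have tall := ((t1.mul t2).sub (t3.const_mul (dx (v1 u) (s, z)))).const_mul (2*z-1)
        refine tall.congr fun h => ?_
        ring
  have hmain : φ 1 - φ 0 - 2 * (∫ z in (0:ℝ)..1, F z) = ∫ z in Ioc (0:ℝ) 1, gI z :=
    tendsto_nhds_unique claim_a claim_b
  -- continuity of gI
  have cgI : Continuous gI := by
    rw [hgIdef]
    have hrw : (fun z => ∫ s in Ioc (0:ℝ) Γ,
        ((2*z-1) * (dy (v1 u) (s, z) * dx p (s, z) - dx (v1 u) (s, z) * dy p (s, z))))
        = fun z => ∫ s in (0:ℝ)..Γ,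
        ((2*z-1) * (dy (v1 u) (s, z) * dx p (s, z) - dx (v1 u) (s, z) * dy p (s, z))) := by
      funext z
      rw [intervalIntegral.integral_of_le hΓ.le]
    rw [hrw]
    apply intervalIntegral.continuous_parametric_intervalIntegral_of_continuous' (μ := volume)
      _ 0 Γ
    have cswap : Continuous fun q : ℝ × ℝ => ((q.2, q.1) : ℝ × ℝ) :=
      continuous_snd.prodMk continuous_fst
    exact ((continuous_const.mul continuous_fst).sub continuous_const).mul
      (((cdyu1.comp cswap).mul (cdxp.comp cswap)).sub
        ((cdxu1.comp cswap).mul (cdyp.comp cswap)))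
  -- assemble: F 0 + F 1 as a double integral
  set W : ℝ × ℝ → ℝ := fun x => -2 * (dx (v1 u) x * p x)
    + (2*x.2 - 1) * (dy (v1 u) x * dx p x - dx (v1 u) x * dy p x) with hWdef
  have cW : Continuous W := by
    rw [hWdef]
    exact (continuous_const.mul (cdxu1.mul cp)).add
      (((continuous_const.mul continuous_snd).sub continuous_const).mul
        ((cdyu1.mul cdxp).sub (cdxu1.mul cdyp)))
  have hiF : IntegrableOn F (Ioc (0:ℝ) 1) :=
    (cF.continuousOn.integrableOn_compact isCompact_Icc).mono_set Ioc_subset_Icc_self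
  have higI : IntegrableOn gI (Ioc (0:ℝ) 1) :=
    (cgI.continuousOn.integrableOn_compact isCompact_Icc).mono_set Ioc_subset_Icc_self
  have hFS : F 0 + F 1 = ∫ z in Ioc (0:ℝ) 1, (2 * F z + gI z) := by
    have h2F : (∫ z in Ioc (0:ℝ) 1, 2 * F z) = 2 * ∫ z in (0:ℝ)..1, F z := by
      rw [intervalIntegral.integral_of_le (by norm_num : (0:ℝ) ≤ 1)]
      exact integral_const_mul 2 F
    have hadd : (∫ z in Ioc (0:ℝ) 1, (2 * F z + gI z))
        = (∫ z in Ioc (0:ℝ) 1, 2 * F z) + ∫ z in Ioc (0:ℝ) 1, gI z :=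
      integral_add (hiF.const_mul 2) higI
    have hφ1 : φ 1 = F 1 := by rw [hphidef]; norm_num
    have hφ0 : φ 0 = -F 0 := by rw [hphidef]; norm_num
    rw [hadd, h2F, ← hmain, hφ1, hφ0]
    ring
  have hinner : ∀ z ∈ Ioc (0:ℝ) 1, 2 * F z + gI z = ∫ s in Ioc (0:ℝ) Γ, W (s, z) := by
    intro z _
    have hFz : F z = ∫ s in Ioc (0:ℝ) Γ, -(dx (v1 u) (s, z) * p (s, z)) := by
      rw [hFdef]
      simp only
      rw [intervalIntegral.integral_of_le hΓ.le]
    have i5 : IntegrableOn (fun s => -2 * (dx (v1 u) (s, z) * p (s, z))) (Ioc (0:ℝ) Γ) :=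
      ((continuous_const.mul ((c3 z).mul (c4 z))).continuousOn.integrableOn_compact
        isCompact_Icc).mono_set Ioc_subset_Icc_self
    have i6 : IntegrableOn (fun s =>
        (2*z-1) * (dy (v1 u) (s, z) * dx p (s, z) - dx (v1 u) (s, z) * dy p (s, z)))
        (Ioc (0:ℝ) Γ) := by
      have c5 : Continuous fun s => dy (v1 u) (s, z) :=
        cdyu1.comp (continuous_id.prodMk continuous_const)
      have c6 : Continuous fun s => dy p (s, z) :=
        cdyp.comp (continuous_id.prodMk continuous_const)
      exact ((continuous_const.mul ((c5.mul (c2 z)).sub ((c3 z).mul c6))).continuousOn.integrableOn_compact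
        isCompact_Icc).mono_set Ioc_subset_Icc_self
    have h2Fz : 2 * F z = ∫ s in Ioc (0:ℝ) Γ, -2 * (dx (v1 u) (s, z) * p (s, z)) := by
      rw [hFz, ← integral_const_mul]
      refine integral_congr_ae (Filter.Eventually.of_forall fun s => ?_)
      ring
    rw [h2Fz, hgIdef]
    simp only
    rw [← integral_add i5 i6]
  have hiter : (∫ z in Ioc (0:ℝ) 1, (2 * F z + gI z))
      = ∫ z in Ioc (0:ℝ) 1, ∫ s in Ioc (0:ℝ) Γ, W (s, z) :=
    setIntegral_congr_fun measurableSet_Ioc hinner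
  -- Fubini
  have hWIcc : IntegrableOn (fun q : ℝ × ℝ => W (q.2, q.1)) (Icc (0:ℝ) 1 ×ˢ Icc (0:ℝ) Γ) :=
    ((cW.comp (continuous_snd.prodMk continuous_fst)).continuousOn).integrableOn_compact
      (isCompact_Icc.prod isCompact_Icc)
  have hWIoc : IntegrableOn (fun q : ℝ × ℝ => W (q.2, q.1)) (Ioc (0:ℝ) 1 ×ˢ Ioc (0:ℝ) Γ) :=
    hWIcc.mono_set (prod_mono Ioc_subset_Icc_self Ioc_subset_Icc_self)
  have hswap : (∫ z in Ioc (0:ℝ) 1, ∫ s in Ioc (0:ℝ) Γ, W (s, z))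
      = ∫ s in Ioc (0:ℝ) Γ, ∫ z in Ioc (0:ℝ) 1, W (s, z) := by
    apply integral_integral_swap (f := fun z s => W (s, z))
    rw [Measure.prod_restrict]
    exact hWIoc
  have hW2 : IntegrableOn W (Ioc (0:ℝ) Γ ×ˢ Ioc (0:ℝ) 1) ((volume : Measure ℝ).prod volume) := by
    exact (cW.continuousOn.integrableOn_compact (isCompact_Icc.prod isCompact_Icc)).mono_set
      (prod_mono Ioc_subset_Icc_self Ioc_subset_Icc_self)
  have hprod : (∫ s in Ioc (0:ℝ) Γ, ∫ z in Ioc (0:ℝ) 1, W (s, z))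
      = ∫ x in Ioc (0:ℝ) Γ ×ˢ Ioc (0:ℝ) 1, W x := by
    rw [show (volume : Measure (ℝ × ℝ)) = (volume : Measure ℝ).prod volume from rfl]
    exact (setIntegral_prod W hW2).symm
  have hdomeq : domF Γ = Icc (0:ℝ) Γ ×ˢ Icc (0:ℝ) 1 := rfl
  have hsubnull : domF Γ \ (Ioc (0:ℝ) Γ ×ˢ Ioc (0:ℝ) 1)
      ⊆ ({0} ×ˢ (univ : Set ℝ)) ∪ ((univ : Set ℝ) ×ˢ ({0} : Set ℝ)) := by
    rintro ⟨a, b⟩ ⟨⟨ha, hb⟩, hn⟩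
    by_cases hA : a ∈ Ioc (0:ℝ) Γ
    · right
      refine ⟨trivial, ?_⟩
      have hB : b ∉ Ioc (0:ℝ) 1 := fun hB => hn ⟨hA, hB⟩
      have hb0 : ¬ (0 < b) := fun h0 => hB ⟨h0, hb.2⟩
      simp [le_antisymm (not_lt.mp hb0) hb.1]
    · left
      refine ⟨?_, trivial⟩
      have ha0 : ¬ (0 < a) := fun h0 => hA ⟨h0, ha.2⟩
      simp [le_antisymm (not_lt.mp ha0) ha.1]
  have hnull : volume (domF Γ \ (Ioc (0:ℝ) Γ ×ˢ Ioc (0:ℝ) 1)) = 0 := by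
    refine measure_mono_null hsubnull (measure_union_null ?_ ?_)
    · rw [show (volume : Measure (ℝ × ℝ)) = (volume : Measure ℝ).prod volume from rfl,
        Measure.prod_prod]
      simp
    · rw [show (volume : Measure (ℝ × ℝ)) = (volume : Measure ℝ).prod volume from rfl,
        Measure.prod_prod]
      simp
  have hae : (Ioc (0:ℝ) Γ ×ˢ Ioc (0:ℝ) 1 : Set (ℝ × ℝ)) =ᵐ[volume] domF Γ := by
    rw [MeasureTheory.ae_eq_set]
    constructor
    · refine measure_mono_null (fun x hx => ?_) (measure_empty (μ := (volume : Measure (ℝ × ℝ))))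
      exact absurd (show x ∈ domF Γ from
        ⟨Ioc_subset_Icc_self hx.1.1, Ioc_subset_Icc_self hx.1.2⟩) hx.2
    · exact hnull
  have hdom : (∫ x in Ioc (0:ℝ) Γ ×ˢ Ioc (0:ℝ) 1, W x) = ∫ x in domF Γ, W x :=
    setIntegral_congr_set hae
  have hSW : F 0 + F 1 = ∫ x in domF Γ, W x := by
    rw [hFS, hiter, hswap, hprod, hdom]
  -- final estimate
  rw [hF0, hF1, hSW]
  have cgp : Continuous fun x : ℝ × ℝ => (p x)^2 + gradSq p x := by
    simp only [gradSq]
    exact (cp.pow 2).add ((cdxp.pow 2).add (cdyp.pow 2))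
  have cvg : Continuous fun x : ℝ × ℝ => vGradSq u x := by
    simp only [vGradSq, gradSq]
    exact ((cdxu1.pow 2).add (cdyu1.pow 2)).add ((cdxu2.pow 2).add (cdyu2.pow 2))
  have hmeasdom : MeasurableSet (domF Γ) := by
    rw [hdomeq]; exact measurableSet_Icc.prod measurableSet_Icc
  have hcompact : IsCompact (domF Γ) := by
    rw [hdomeq]; exact isCompact_Icc.prod isCompact_Icc
  have hWint : IntegrableOn W (domF Γ) := cW.continuousOn.integrableOn_compact hcompact
  have gp0 : ∀ x, 0 ≤ (p x)^2 + gradSq p x := fun x => by simp only [gradSq]; positivity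
  have vg0 : ∀ x, 0 ≤ vGradSq u x := fun x => by simp only [vGradSq, gradSq]; positivity
  have hvgint : IntegrableOn (fun x => vGradSq u x) (domF Γ) :=
    cvg.continuousOn.integrableOn_compact hcompact
  have hmaj : ∀ x ∈ domF Γ, |W x|
      ≤ 2 * Real.sqrt 2 * (Real.sqrt ((p x)^2 + gradSq p x) * Real.sqrt (vGradSq u x)) := by
    intro x hx
    have hx2 : x.2 ∈ Icc (0:ℝ) 1 := hx.2
    have h2z : |2*x.2 - 1| ≤ 1 := abs_le.mpr ⟨by linarith [hx2.1], by linarith [hx2.2]⟩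
    have key1 : |W x| ≤ 2 * (|p x| * |dx (v1 u) x| + |dx p x| * |dy (v1 u) x|
        + |dy p x| * |dx (v1 u) x|) := by
      rw [hWdef]
      simp only
      have t1 : |(-2 : ℝ) * (dx (v1 u) x * p x)| = 2 * (|dx (v1 u) x| * |p x|) := by
        rw [abs_mul, abs_mul]
        norm_num
      have t2 : |(2*x.2-1) * (dy (v1 u) x * dx p x - dx (v1 u) x * dy p x)|
          ≤ 1 * (|dy (v1 u) x| * |dx p x| + |dx (v1 u) x| * |dy p x|) := by
        rw [abs_mul]
        refine mul_le_mul h2z ?_ (abs_nonneg _) zero_le_one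
        refine (habs _ _).trans ?_
        rw [abs_mul, abs_mul]
      have t3 := abs_add_le ((-2 : ℝ) * (dx (v1 u) x * p x))
        ((2*x.2-1) * (dy (v1 u) x * dx p x - dx (v1 u) x * dy p x))
      calc |(-2 : ℝ) * (dx (v1 u) x * p x)
            + (2*x.2-1) * (dy (v1 u) x * dx p x - dx (v1 u) x * dy p x)| ≤
          2 * (|dx (v1 u) x| * |p x|)
            + (|dy (v1 u) x| * |dx p x| + |dx (v1 u) x| * |dy p x|) := by
            refine t3.trans ?_
            rw [t1]
            linarith [t2]
      _ = 2 * (|p x| * |dx (v1 u) x| + |dx p x| * |dy (v1 u) x|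
            + |dy p x| * |dx (v1 u) x|) - (|dx p x| * |dy (v1 u) x|
            + |dy p x| * |dx (v1 u) x|) := by ring
      _ ≤ 2 * (|p x| * |dx (v1 u) x| + |dx p x| * |dy (v1 u) x|
            + |dy p x| * |dx (v1 u) x|) := by
            have h1 : 0 ≤ |dx p x| * |dy (v1 u) x| := by positivity
            have h2 : 0 ≤ |dy p x| * |dx (v1 u) x| := by positivity
            linarith
    have key2 := cs3 (abs_nonneg (p x)) (abs_nonneg (dx (v1 u) x)) (abs_nonneg (dx p x))
      (abs_nonneg (dy (v1 u) x)) (abs_nonneg (dy p x)) (abs_nonneg (dx (v1 u) x))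
    have key3 : Real.sqrt (|p x|^2 + |dx p x|^2 + |dy p x|^2)
        = Real.sqrt ((p x)^2 + gradSq p x) := by
      simp only [sq_abs, gradSq]
      ring_nf
    have key4 : Real.sqrt (|dx (v1 u) x|^2 + |dy (v1 u) x|^2 + |dx (v1 u) x|^2)
        ≤ Real.sqrt (2 * vGradSq u x) := by
      apply Real.sqrt_le_sqrt
      simp only [sq_abs, vGradSq, gradSq]
      nlinarith [sq_nonneg (dx (v2 u) x), sq_nonneg (dy (v2 u) x)]
    have key5 : Real.sqrt (2 * vGradSq u x) = Real.sqrt 2 * Real.sqrt (vGradSq u x) :=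
      Real.sqrt_mul (by norm_num) _
    calc |W x| ≤ 2 * (|p x| * |dx (v1 u) x| + |dx p x| * |dy (v1 u) x|
        + |dy p x| * |dx (v1 u) x|) := key1
    _ ≤ 2 * (Real.sqrt ((p x)^2 + gradSq p x) * Real.sqrt (2 * vGradSq u x)) := by
        have h8 : Real.sqrt (|p x|^2 + |dx p x|^2 + |dy p x|^2)
            * Real.sqrt (|dx (v1 u) x|^2 + |dy (v1 u) x|^2 + |dx (v1 u) x|^2)
            ≤ Real.sqrt ((p x)^2 + gradSq p x) * Real.sqrt (2 * vGradSq u x) := by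
          rw [key3]
          exact mul_le_mul_of_nonneg_left key4 (Real.sqrt_nonneg _)
        have h7 := key2.trans h8
        linarith
    _ = 2 * Real.sqrt 2 * (Real.sqrt ((p x)^2 + gradSq p x) * Real.sqrt (vGradSq u x)) := by
        rw [key5]; ring
  have hmajint : IntegrableOn (fun x => 2 * Real.sqrt 2 *
      (Real.sqrt ((p x)^2 + gradSq p x) * Real.sqrt (vGradSq u x))) (domF Γ) :=
    ((continuous_const.mul ((Real.continuous_sqrt.comp cgp).mul
      (Real.continuous_sqrt.comp cvg))).continuousOn).integrableOn_compact hcompact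
  have habs0 : |∫ x in domF Γ, W x| ≤ ∫ x in domF Γ, |W x| := by
    simpa [Real.norm_eq_abs] using
      norm_integral_le_integral_norm (μ := volume.restrict (domF Γ)) W
  calc |∫ x in domF Γ, W x| ≤ ∫ x in domF Γ, |W x| := habs0
  _ ≤ ∫ x in domF Γ, 2 * Real.sqrt 2 *
      (Real.sqrt ((p x)^2 + gradSq p x) * Real.sqrt (vGradSq u x)) :=
    setIntegral_mono_on hWint.abs hmajint hmeasdom hmaj
  _ = 2 * Real.sqrt 2 * ∫ x in domF Γ,
      Real.sqrt ((p x)^2 + gradSq p x) * Real.sqrt (vGradSq u x) :=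
    integral_const_mul _ _
  _ ≤ 2 * Real.sqrt 2 * (Real.sqrt (∫ x in domF Γ, ((p x)^2 + gradSq p x))
      * Real.sqrt (∫ x in domF Γ, vGradSq u x)) := by
    refine mul_le_mul_of_nonneg_left ?_ (by positivity)
    exact integral_sqrt_mul_sqrt_le (volume.restrict (domF Γ)) gp0 vg0 hp_H1 hvgint
  _ ≤ 4 * Real.sqrt (∫ x in domF Γ, ((p x)^2 + gradSq p x))
      * Real.sqrt (∫ x in domF Γ, vGradSq u x) := by
    have hs2 : Real.sqrt 2 ≤ 2 := by
      nlinarith [Real.sq_sqrt (by norm_num : (0:ℝ) ≤ 2), Real.sqrt_nonneg 2]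
    have h1 : (0:ℝ) ≤ Real.sqrt (∫ x in domF Γ, ((p x)^2 + gradSq p x)) := Real.sqrt_nonneg _
    have h2 : (0:ℝ) ≤ Real.sqrt (∫ x in domF Γ, vGradSq u x) := Real.sqrt_nonneg _
    nlinarith [mul_nonneg h1 h2]

end RB
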